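/- Let n ≥ 1 and let Q be an n×n real matrix that is a CTMC generator matrix (all off-diagonal entries are nonnegative and every row sums to zero). Let Λ > 0 satisfy Λ ≥ max_i |Q_{ii}|, and set P = I + Q/Λ. Let t > 0, let U be a natural number, and let π̂ and π be nonnegative row vectors in ℝ^n with ‖π̂‖₁ ≤ 1. Then ‖ π̂ · Σ_{m=0}^{U} e^{−Λt} ((Λt)^m / m!) P^m − π · exp(tQ) ‖₁ ≤ ‖π̂ − π‖₁ + (1 − Σ_{m=0}^{U} e^{−Λt} (Λt)^m / m!), where exp denotes the matrix exponential and ‖·‖₁ is the ℓ¹ norm on row vectors. -/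

import Mathlib

/-!
Since `t • Q = (Λ t) • (P - 1)` with `P` row-stochastic, `exp (t • Q)` is the Poisson(Λt)
mixture `∑ₘ e^{-Λt} (Λt)^m / m! • P ^ m` of stochastic matrices. Hence `exp (t • Q)` is
stochastic, and its tail beyond `U` is nonnegative with row sums equal to the missing Poisson
mass. Writing the error as `(π̂ - π) ᵥ* exp (t • Q) - π̂ ᵥ* tail`, it remains to note that a
nonnegative matrix with row sums `r` multiplies ℓ¹ norms by at most `r`.
-/

open Matrix Finset

noncomputable def poissonWeight (x : ℝ) (m : ℕ) : ℝ := Real.exp (-x) * x ^ m / m.factorial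

lemma poissonWeight_nonneg {x : ℝ} (hx : 0 ≤ x) (m : ℕ) : 0 ≤ poissonWeight x m := by
  unfold poissonWeight; positivity

lemma hasSum_poissonWeight (x : ℝ) : HasSum (poissonWeight x) 1 := by
  have h := (NormedSpace.expSeries_div_hasSum_exp x).mul_left (Real.exp (-x))
  rw [← Real.exp_eq_exp_ℝ, ← Real.exp_add, neg_add_cancel, Real.exp_zero] at h
  have hterm : poissonWeight x = fun m => Real.exp (-x) * (x ^ m / m.factorial) :=
    funext fun _ => mul_div_assoc _ _ _
  rwa [hterm]

namespace Matrix

variable {ι κ : Type*} [Fintype ι]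

lemma one_add_inv_smul_mem_rowStochastic [DecidableEq ι] {Q : Matrix ι ι ℝ}
    (hoff : ∀ i j, i ≠ j → 0 ≤ Q i j) (hrow : ∀ i, ∑ j, Q i j = 0)
    {Λ : ℝ} (hΛ : 0 < Λ) (hdiag : ∀ i, -Λ ≤ Q i i) :
    1 + Λ⁻¹ • Q ∈ rowStochastic ℝ ι := by
  refine mem_rowStochastic_iff_sum.2 ⟨fun i j => ?_, fun i => ?_⟩
  · rcases eq_or_ne i j with rfl | hij
    · have : -1 ≤ Λ⁻¹ * Q i i := by
        rw [le_inv_mul_iff₀ hΛ]; linarith [hdiag i]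
      simpa [add_comm] using neg_le_iff_add_nonneg.1 this
    · simpa [one_apply_ne hij] using mul_nonneg (inv_nonneg.2 hΛ.le) (hoff i j hij)
  · simp [sum_add_distrib, ← mul_sum, hrow, one_apply]

lemma sum_abs_vecMul_le {R : Type*} [CommRing R] [LinearOrder R] [IsStrictOrderedRing R]
    [Fintype κ] {M : Matrix ι κ R} {r : R}
    (hM : ∀ i j, 0 ≤ M i j) (hrow : ∀ i, ∑ j, M i j = r) (v : ι → R) :
    ∑ j, |(v ᵥ* M) j| ≤ (∑ i, |v i|) * r := calc
  ∑ j, |(v ᵥ* M) j| ≤ ∑ j, ∑ i, |v i| * M i j := by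
    gcongr with j
    refine (abs_sum_le_sum_abs _ _).trans_eq (sum_congr rfl fun i _ => ?_)
    rw [abs_mul, abs_of_nonneg (hM i j)]
  _ = (∑ i, |v i|) * r := by
    simp_rw [sum_comm (γ := κ), ← mul_sum, hrow, sum_mul]

lemma nonneg_and_sum_row_of_hasSum [DecidableEq ι] {c : ℕ → ℝ} {M : ℕ → Matrix ι ι ℝ}
    {S : Matrix ι ι ℝ} {s : ℝ} (hc : ∀ m, 0 ≤ c m) (hM : ∀ m, M m ∈ rowStochastic ℝ ι)
    (hS : HasSum (fun m => c m • M m) S) (hs : HasSum c s) :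
    (∀ i j, 0 ≤ S i j) ∧ ∀ i, ∑ j, S i j = s := by
  have hentry : ∀ i j, HasSum (fun m => c m * M m i j) (S i j) := fun i j =>
    Pi.hasSum.1 (Pi.hasSum.1 hS i) j
  refine ⟨fun i j => (hentry i j).nonneg fun m => mul_nonneg (hc m) ((hM m).1 i j), fun i => ?_⟩
  refine (hasSum_sum fun j _ => hentry i j).unique ?_
  simpa only [← mul_sum, sum_row_of_mem_rowStochastic (hM _), mul_one] using hs

lemma hasSum_poissonWeight_smul_pow [DecidableEq ι] (x : ℝ) (P : Matrix ι ι ℝ) :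
    HasSum (fun m => poissonWeight x m • P ^ m) (NormedSpace.exp (x • (P - 1))) := by
  let _ : NormedRing (Matrix ι ι ℝ) := Matrix.linftyOpNormedRing
  let _ : NormedAlgebra ℝ (Matrix ι ι ℝ) := Matrix.linftyOpNormedAlgebra
  have hsplit : x • (P - 1) = algebraMap ℝ _ (-x) + x • P := by
    rw [Algebra.algebraMap_eq_smul_one, smul_sub, neg_smul]; abel
  have hscalar : NormedSpace.exp (algebraMap ℝ (Matrix ι ι ℝ) (-x)) = Real.exp (-x) • 1 := by
    rw [Real.exp_eq_exp_ℝ, ← Algebra.algebraMap_eq_smul_one]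
    exact (NormedSpace.algebraMap_exp_comm _).symm
  rw [hsplit, exp_add_of_commute _ _ (Algebra.commute_algebraMap_left _ _), hscalar,
    smul_one_mul]
  have hterm : (fun m => poissonWeight x m • P ^ m) =
      fun m => Real.exp (-x) • ((m.factorial⁻¹ : ℝ) • (x • P) ^ m) := by
    funext m
    rw [smul_pow, smul_smul, smul_smul, poissonWeight]
    ring_nf
  rw [hterm]
  exact (NormedSpace.exp_series_hasSum_exp' (x • P)).const_smul (Real.exp (-x))

lemma sum_abs_vecMul_sub_vecMul_le [DecidableEq ι] {E A : Matrix ι ι ℝ} {r : ℝ}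
    (hE : E ∈ rowStochastic ℝ ι) (hnn : ∀ i j, 0 ≤ (E - A) i j)
    (hrow : ∀ i, ∑ j, (E - A) i j = r) (v w : ι → ℝ) :
    ∑ j, |(v ᵥ* A) j - (w ᵥ* E) j| ≤ ∑ i, |v i - w i| + (∑ i, |v i|) * r := by
  have hsplit : v ᵥ* A - w ᵥ* E = (v - w) ᵥ* E - v ᵥ* (E - A) := by
    rw [sub_vecMul, vecMul_sub]; abel
  calc ∑ j, |(v ᵥ* A) j - (w ᵥ* E) j|
      = ∑ j, |((v - w) ᵥ* E) j - (v ᵥ* (E - A)) j| := by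
        simp only [← Pi.sub_apply, hsplit]
    _ ≤ ∑ j, |((v - w) ᵥ* E) j| + ∑ j, |(v ᵥ* (E - A)) j| := by
        rw [← sum_add_distrib]; exact sum_le_sum fun j _ => abs_sub _ _
    _ ≤ (∑ i, |v i - w i|) * 1 + (∑ i, |v i|) * r :=
        add_le_add (sum_abs_vecMul_le hE.1 (sum_row_of_mem_rowStochastic hE) _)
          (sum_abs_vecMul_le hnn hrow v)
    _ = ∑ i, |v i - w i| + (∑ i, |v i|) * r := by rw [mul_one]

end Matrix

theorem truncated_uniformization_error_bound_general
    {n : ℕ} (Q : Matrix (Fin n) (Fin n) ℝ)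
    (hoff : ∀ i j : Fin n, i ≠ j → 0 ≤ Q i j)
    (hrow : ∀ i : Fin n, ∑ j, Q i j = 0)
    (Λ : ℝ) (hΛ : 0 < Λ) (hΛQ : ∀ i : Fin n, |Q i i| ≤ Λ)
    (t : ℝ) (ht : 0 < t) (U : ℕ)
    (πhat π : Fin n → ℝ)
    (hπhat1 : ∑ i, |πhat i| ≤ 1)
    (P : Matrix (Fin n) (Fin n) ℝ)
    (hP : P = 1 + Λ⁻¹ • Q) :
    ∑ i, |(πhat ᵥ* (∑ m ∈ Finset.range (U + 1),
            (Real.exp (-(Λ * t)) * (Λ * t) ^ m / m.factorial) • P ^ m)) i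
          - (π ᵥ* NormedSpace.exp (t • Q)) i|
      ≤ (∑ i, |πhat i - π i|)
        + (1 - ∑ m ∈ Finset.range (U + 1),
              Real.exp (-(Λ * t)) * (Λ * t) ^ m / m.factorial) := by
  have hweight := poissonWeight_nonneg (by positivity : 0 ≤ Λ * t)
  have hPmem : P ∈ rowStochastic ℝ (Fin n) :=
    hP ▸ one_add_inv_smul_mem_rowStochastic hoff hrow hΛ fun i => neg_le_of_abs_le (hΛQ i)
  have hpow : ∀ m, P ^ m ∈ rowStochastic ℝ (Fin n) := fun m => pow_mem hPmem m
  have htQ : t • Q = (Λ * t) • (P - 1) := by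
    rw [hP, add_sub_cancel_left, smul_smul, mul_comm Λ t, mul_inv_cancel_right₀ hΛ.ne']
  have hseries := hasSum_poissonWeight_smul_pow (Λ * t) P
  rw [← htQ] at hseries
  have hexp : NormedSpace.exp (t • Q) ∈ rowStochastic ℝ (Fin n) := mem_rowStochastic_iff_sum.2 <|
    nonneg_and_sum_row_of_hasSum (M := (P ^ ·)) hweight hpow hseries (hasSum_poissonWeight _)
  have htail := (hasSum_nat_add_iff' (U + 1)).2 hseries
  have htail_mass := (hasSum_nat_add_iff' (f := poissonWeight (Λ * t)) (U + 1)).2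
    (hasSum_poissonWeight _)
  obtain ⟨htail_nonneg, htail_row⟩ :=
    nonneg_and_sum_row_of_hasSum (M := fun m => P ^ (m + (U + 1))) (fun _ => hweight _)
      (fun _ => hpow _) htail htail_mass
  have hmass : ∑ m ∈ range (U + 1), poissonWeight (Λ * t) m ≤ 1 :=
    sum_le_hasSum _ (fun m _ => hweight m) (hasSum_poissonWeight _)
  calc _ ≤ _ := sum_abs_vecMul_sub_vecMul_le hexp htail_nonneg htail_row πhat π
    _ ≤ _ := by gcongr; exact mul_le_of_le_one_left (sub_nonneg.2 hmass) hπhat1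

/-- Single-interval error bound for truncated uniformization
(exact single-interval form of Theorem 1). -/
theorem truncated_uniformization_error_bound
    {n : ℕ} (hn : 1 ≤ n) (Q : Matrix (Fin n) (Fin n) ℝ)
    (hoff : ∀ i j : Fin n, i ≠ j → 0 ≤ Q i j)
    (hrow : ∀ i : Fin n, ∑ j, Q i j = 0)
    (Λ : ℝ) (hΛ : 0 < Λ) (hΛQ : ∀ i : Fin n, |Q i i| ≤ Λ)
    (t : ℝ) (ht : 0 < t) (U : ℕ)
    (πhat π : Fin n → ℝ)
    (hπhat : ∀ i, 0 ≤ πhat i) (hπ : ∀ i, 0 ≤ π i)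
    (hπhat1 : ∑ i, |πhat i| ≤ 1)
    (P : Matrix (Fin n) (Fin n) ℝ)
    (hP : P = 1 + Λ⁻¹ • Q) :
    ∑ i, |(πhat ᵥ* (∑ m ∈ Finset.range (U + 1),
            (Real.exp (-(Λ * t)) * (Λ * t) ^ m / m.factorial) • P ^ m)) i
          - (π ᵥ* NormedSpace.exp (t • Q)) i|
      ≤ (∑ i, |πhat i - π i|)
        + (1 - ∑ m ∈ Finset.range (U + 1),
              Real.exp (-(Λ * t)) * (Λ * t) ^ m / m.factorial) :=
  truncated_uniformization_error_bound_general Q hoff hrow Λ hΛ hΛQ t ht U πhat π hπhat1 P hP
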